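/- arXiv:0907.0924 — 2 statements merged into one kernel-verified Lean document; each statement's English description precedes it below -/
import Mathlib

section
/- Let F, G : Fields_k → Sets be covariant functors and φ : F → G a natural transformation. Suppose d ≥ 0 is such that for every intermediate field k ⊆ K ⊆ L and every a ∈ F(L) whose image φ_L(a) descends to K, the element a descends to an intermediate field K ⊆ K' ⊆ L with trdeg_K K' ≤ d. Then ed_k F ≤ ed_k G + d. -/
/-!
STATEMENT 2: (functorial fiber dimension theorem) Let `φ : F → G` be a natural
transformation of functors `Fields_k → Sets` and `d ≥ 0` such that whenever
`φ_L(a)` descends to an intermediate field `K` of `L/k`, the element `a` descends to an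
intermediate field `K ⊆ K' ⊆ L` with `trdeg_K K' ≤ d`.  Then `ed_k F ≤ ed_k G + d`.

`ed_k F ≤ e` is formalized as: every element of `F` descends to an intermediate field of
transcendence degree `≤ e`; the conclusion `ed_k F ≤ ed_k G + d` is formalized as: every
such upper bound `e` for `ed_k G` yields the upper bound `e + d` for `ed_k F`.
-/

universe u

/-- Transcendence degree of `K` over `k`. -/
noncomputable def trdeg (k K : Type u) [CommRing k] [CommRing K] [Algebra k K] :
    Cardinal.{u} :=
  ⨆ s : { s : Set K // AlgebraicIndependent k ((↑) : s → K) }, Cardinal.mk s.1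

/-- A covariant functor from the category of field extensions of `k` to sets. -/
structure FieldFunctor (k : Type u) [Field k] where
  obj : ∀ (L : Type u) [Field L] [Algebra k L], Type u
  map : ∀ {L M : Type u} [Field L] [Algebra k L] [Field M] [Algebra k M],
    (L →ₐ[k] M) → obj L → obj M
  map_id : ∀ (L : Type u) [Field L] [Algebra k L] (a : obj L), map (AlgHom.id k L) a = a
  map_comp : ∀ {L M N : Type u} [Field L] [Algebra k L] [Field M] [Algebra k M]
    [Field N] [Algebra k N] (f : L →ₐ[k] M) (g : M →ₐ[k] N) (a : obj L),
    map (g.comp f) a = map g (map f a)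

/-- A natural transformation `φ : F → G` of functors `Fields_k → Sets`. -/
structure FieldFunctor.Hom {k : Type u} [Field k] (F G : FieldFunctor k) where
  app : ∀ (L : Type u) [Field L] [Algebra k L], F.obj L → G.obj L
  naturality : ∀ {L M : Type u} [Field L] [Algebra k L] [Field M] [Algebra k M]
    (f : L →ₐ[k] M) (a : F.obj L), app M (F.map f a) = G.map f (app L a)

/-- `ed_k F ≤ d`. -/
def FieldFunctor.EssDimLE {k : Type u} [Field k] (F : FieldFunctor k) (d : Cardinal.{u}) :
    Prop :=
  ∀ (L : Type u) [Field L] [Algebra k L] (a : F.obj L),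
    ∃ (E : IntermediateField k L) (b : F.obj E),
      F.map E.val b = a ∧ trdeg k E ≤ d

theorem trdeg_eq_algebra_trdeg (k K : Type u) [CommRing k] [CommRing K] [Algebra k K] :
    trdeg k K = Algebra.trdeg k K :=
  rfl

theorem trdeg_restrictScalars {k L : Type u} [Field k] [Field L] [Algebra k L]
    (E : IntermediateField k L) (K' : IntermediateField E L) :
    trdeg k (K'.restrictScalars k) = trdeg k E + trdeg E K' := by
  have : FaithfulSMul E K' :=
    (faithfulSMul_iff_algebraMap_injective E K').mpr (algebraMap E K').injective
  simp only [trdeg_eq_algebra_trdeg]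
  exact (trdeg_add_eq k E (A := K')).symm

theorem stmt2 {k : Type u} [Field k] (F G : FieldFunctor k) (φ : F.Hom G)
    (d : Cardinal.{u})
    (hfib : ∀ (L : Type u) [Field L] [Algebra k L] (a : F.obj L)
      (K : IntermediateField k L),
      -- if `φ_L a` descends to `K` ...
      (∃ c : G.obj K, G.map K.val c = φ.app L a) →
      -- ... then `a` descends to some `K ⊆ K' ⊆ L` with `trdeg_K K' ≤ d`
      (∃ (K' : IntermediateField K L) (b : F.obj K'),
        F.map ((IntermediateField.val K').restrictScalars k) b = a ∧ trdeg K K' ≤ d)) :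
    ∀ e : Cardinal.{u}, G.EssDimLE e → F.EssDimLE (e + d) := by
  intro e hG L _ _ a
  obtain ⟨E, c, hc, hE⟩ := hG L (φ.app L a)
  obtain ⟨K', b, hb, hK'⟩ := hfib L a E ⟨c, hc⟩
  refine ⟨K'.restrictScalars k, b, hb, ?_⟩
  rw [trdeg_restrictScalars]
  exact add_le_add hE hK'
end

section
/- Let n ≥ 2 and consider the left-multiplication action of GL_n on the space M of n×n matrices over an algebraically closed field of characteristic 0. For 1 ≤ r ≤ n−1, the map sending a matrix of rank exactly r to its kernel is a surjective GL_n-equivariant morphism from the rank-r locus Y_r ⊆ M to the Grassmannian Gr(n−r, n), and every L-point of Gr(n−r, n) (L any field extension) lifts to an L-point of Y_r. Consequently the essential dimension of the quotient stack [M/GL_n] is at least max_{1 ≤ r ≤ n−1} dim Gr(n−r, n) = ⌊n²/4⌋. -/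
/-!
Over `L = F(x_ij)` take the matrix `[[0, 0], [X, 1_r]]` with `X` an `r × k` matrix of independent
indeterminates, `k = n - r`. Its kernel is the graph `{(u, -X u)}`, so `X` can be read off from
the kernel, and left multiplication by `GL_n(L)` does not change the kernel. If `g m` is defined
over `E`, the kernel vector `(e_j, -X e_j)` is pinned down by linear conditions with coefficients
in `E`; since solvability of a linear system descends along a field extension, this vector is
`E`-rational. So all entries of `X` lie in `E`, `trdeg E ≥ r k`, and `r = ⌊n / 2⌋` gives `⌊n² / 4⌋`.
-/

universe u

open Matrix

theorem Matrix.unit_mul_mulVec_eq_zero_iff {ι κ R : Type*} [Fintype ι] [Fintype κ] [DecidableEq ι]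
    [CommRing R] (g : GL ι R) (M : Matrix ι κ R) (u : κ → R) :
    ((g : Matrix ι ι R) * M) *ᵥ u = 0 ↔ M *ᵥ u = 0 := by
  rw [← mulVec_mulVec]
  exact (mulVec_injective_of_isUnit g.isUnit).eq_iff' (mulVec_zero _)

theorem Matrix.ker_unit_mul_mulVecLin {ι κ R : Type*} [Fintype ι] [Fintype κ] [DecidableEq ι]
    [CommRing R] (g : GL ι R) (M : Matrix ι κ R) :
    LinearMap.ker ((g : Matrix ι ι R) * M).mulVecLin = LinearMap.ker M.mulVecLin := by
  ext u
  exact unit_mul_mulVec_eq_zero_iff g M u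

theorem Matrix.exists_ker_mulVecLin_eq {ι K : Type*} [Fintype ι] [DecidableEq ι]
    [Field K] (W : Submodule K (ι → K)) :
    ∃ m : Matrix ι ι K, m.rank + Module.finrank K W = Fintype.card ι ∧
      LinearMap.ker m.mulVecLin = W := by
  obtain ⟨C, hC⟩ := W.exists_isCompl
  set p := C.subtype ∘ₗ C.projectionOnto W hC.symm
  have hp : LinearMap.ker p = W := by
    rw [LinearMap.ker_comp, Submodule.ker_subtype, Submodule.comap_bot,
      Submodule.ker_projectionOnto]
  have hm : (LinearMap.toMatrix' p).mulVecLin = p := by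
    rw [← toLin'_apply', toLin'_toMatrix']
  refine ⟨LinearMap.toMatrix' p, ?_, by rw [hm, hp]⟩
  rw [Matrix.rank, hm, ← hp, LinearMap.finrank_range_add_finrank_ker,
    Module.finrank_fintype_fun_eq_card]

theorem Matrix.exists_mulVec_eq_of_map {ι κ E L : Type*} [Fintype ι] [Fintype κ] [DecidableEq ι]
    [Field E] [Field L] (f : E →+* L) (C : Matrix ι κ E) (b : ι → E) {w : κ → L}
    (hw : C.map f *ᵥ w = f ∘ b) : ∃ v, C *ᵥ v = b := by
  classical
  -- otherwise a functional `y ⬝ᵥ ·` over `E` kills the range of `C` but not `b`; over `L` it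
  -- then kills `C.map f *ᵥ w = f ∘ b` as well
  by_contra! hb
  obtain ⟨φ, hφb, hφC⟩ := (LinearMap.range C.mulVecLin).exists_dual_map_eq_bot_of_notMem
    (x := b) (by rintro ⟨v, hv⟩; exact hb v hv) inferInstance
  obtain ⟨y, rfl⟩ := (dotProductEquiv E ι).surjective φ
  have hyC : y ᵥ* C = 0 := by
    ext j
    have : y ⬝ᵥ C *ᵥ Pi.single j 1 = 0 := LinearMap.le_ker_iff_map.2 hφC ⟨Pi.single j 1, rfl⟩
    rwa [dotProduct_mulVec, dotProduct_single_one] at this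
  apply hφb
  apply f.injective
  have : f ∘ y ᵥ* C.map f = 0 := funext fun j => by rw [← RingHom.map_vecMul, hyC]; simp
  simp [RingHom.map_dotProduct, ← hw, dotProduct_mulVec, this]

theorem Matrix.map_mulVec_comp {ι κ R S : Type*} [Fintype κ] [NonAssocSemiring R]
    [NonAssocSemiring S] (f : R →+* S) (A : Matrix ι κ R) (v : κ → R) :
    A.map f *ᵥ (f ∘ v) = f ∘ (A *ᵥ v) :=
  funext fun i => (RingHom.map_mulVec f A v i).symm

theorem Matrix.exists_comp_eq_of_mulVec_eq_zero {ι σ κ E L : Type*} [Fintype ι] [Fintype σ]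
    [Fintype κ] [DecidableEq ι] [DecidableEq σ] [Field E] [Field L] (f : E →+* L)
    {A : Matrix ι κ E} {P : Matrix σ κ E}
    (hAP : ∀ u, A.map f *ᵥ u = 0 → P.map f *ᵥ u = 0 → u = 0)
    {w : κ → L} (hw : A.map f *ᵥ w = 0) {c : σ → E} (hc : P.map f *ᵥ w = f ∘ c) :
    ∃ v, f ∘ v = w := by
  obtain ⟨v, hv⟩ := (fromRows A P).exists_mulVec_eq_of_map f (Sum.elim 0 c) (w := w) (by
    rw [fromRows_map, fromRows_mulVec, hw, hc]
    ext (i | i) <;> simp)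
  rw [fromRows_mulVec] at hv
  have hAv : A *ᵥ v = 0 := funext fun i => congrFun hv (Sum.inl i)
  have hPv : P *ᵥ v = c := funext fun i => congrFun hv (Sum.inr i)
  refine ⟨v, sub_eq_zero.1 (hAP _ ?_ ?_)⟩
  · rw [mulVec_sub, map_mulVec_comp, hAv, hw]; ext; simp
  · rw [mulVec_sub, map_mulVec_comp, hPv, hc, sub_self]

theorem Matrix.mem_range_of_mulVec_eq_zero_iff_fromBlocks {ι κ ρ E L : Type*} [Fintype ι]
    [Fintype κ] [Fintype ρ] [DecidableEq ι] [DecidableEq κ] [DecidableEq ρ] [Field E] [Field L]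
    (f : E →+* L) (X : Matrix ρ κ L) (A : Matrix ι (κ ⊕ ρ) E)
    (hA : ∀ u, A.map f *ᵥ u = 0 ↔ fromBlocks (0 : Matrix κ κ L) 0 X 1 *ᵥ u = 0) (i : ρ) (j : κ) :
    X i j ∈ Set.range f := by
  set P : Matrix κ (κ ⊕ ρ) E := fromCols 1 0
  have hP : ∀ u : κ ⊕ ρ → L, P.map f *ᵥ u = u ∘ Sum.inl := fun u => by simp [P, fromCols_map]
  have hAP : ∀ u, A.map f *ᵥ u = 0 → P.map f *ᵥ u = 0 → u = 0 := by
    intro u hu hPu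
    rw [hP] at hPu
    rw [hA, fromBlocks_mulVec, hPu] at hu
    have hur : u ∘ Sum.inr = 0 := by simpa using congrArg (fun x => x ∘ Sum.inr) hu
    ext (k | k)
    exacts [congrFun hPu k, congrFun hur k]
  set w : κ ⊕ ρ → L := Sum.elim (Pi.single j 1) (-X.col j)
  have hw : A.map f *ᵥ w = 0 := by rw [hA, fromBlocks_mulVec]; ext (k | k) <;> simp [w]
  have hPw : P.map f *ᵥ w = f ∘ Pi.single j 1 := by
    rw [hP]; ext k; simp [w, Pi.single_apply, apply_ite f]
  obtain ⟨v, hv⟩ := exists_comp_eq_of_mulVec_eq_zero f hAP hw hPw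
  refine ⟨-v (Sum.inr i), ?_⟩
  have hvi : f (v (Sum.inr i)) = -X i j := congrFun hv (Sum.inr i)
  rw [map_neg, hvi, neg_neg]

theorem Matrix.map_submatrix_mulVec_eq_zero_iff {ι κ E L : Type*} [Fintype ι] [Fintype κ]
    [DecidableEq ι] [CommRing E] [CommRing L] (f : E →+* L) (e : κ ≃ ι) {M : Matrix κ κ L}
    {A : Matrix ι ι E} (g : GL ι L) (h : A.map f = g * M.submatrix e.symm e.symm) (u : κ → L) :
    (A.submatrix id e).map f *ᵥ u = 0 ↔ M *ᵥ u = 0 := by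
  rw [← submatrix_map, h, submatrix_mulVec_equiv, Function.comp_id,
    unit_mul_mulVec_eq_zero_iff, submatrix_mulVec_equiv, Equiv.symm_symm, Function.comp_assoc,
    Equiv.symm_comp_self, Function.comp_id]
  exact e.symm.surjective.injective_comp_right.eq_iff' rfl

theorem lift_cardinalMk_le_trdeg {F K : Type u} {ι : Type*} [CommRing F] [Nontrivial F]
    [CommRing K] [Algebra F K] {x : ι → K} (hx : AlgebraicIndependent F x) :
    Cardinal.lift.{u} (Cardinal.mk ι) ≤ Cardinal.lift (trdeg F K) := by
  rw [← Cardinal.mk_range_eq_of_injective hx.injective, Cardinal.lift_le]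
  exact le_ciSup Cardinal.bddAbove_of_small
    (⟨Set.range x, hx.coe_range⟩ : { s : Set K // AlgebraicIndependent F ((↑) : s → K) })

theorem IntermediateField.lift_cardinalMk_le_trdeg_of_forall_mem {F L : Type u} {ι : Type*}
    [Field F] [Field L] [Algebra F L] {E : IntermediateField F L} {x : ι → L}
    (hx : AlgebraicIndependent F x) (hxE : ∀ i, x i ∈ E) :
    Cardinal.lift.{u} (Cardinal.mk ι) ≤ Cardinal.lift (trdeg F E) :=
  lift_cardinalMk_le_trdeg (x := fun i => ⟨x i, hxE i⟩) (hx.of_comp E.val)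

theorem Nat.div_two_mul_sub_div_two (n : ℕ) : n / 2 * (n - n / 2) = n ^ 2 / 4 := by
  obtain ⟨m, rfl | rfl⟩ := Nat.even_or_odd' n
  · rw [show 2 * m / 2 = m by omega, show 2 * m - m = m by omega,
      show (2 * m) ^ 2 = 4 * (m * m) by ring]
    omega
  · rw [show (2 * m + 1) / 2 = m by omega, show 2 * m + 1 - m = m + 1 by omega,
      show (2 * m + 1) ^ 2 = 4 * (m * (m + 1)) + 1 by ring]
    omega

theorem isGreatest_mul_sub {n : ℕ} (hn : 2 ≤ n) :
    IsGreatest ((fun r => r * (n - r)) '' Set.Icc 1 (n - 1)) (n ^ 2 / 4) := by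
  refine ⟨⟨n / 2, ⟨by omega, by omega⟩, n.div_two_mul_sub_div_two⟩, ?_⟩
  rintro _ ⟨r, ⟨-, hr⟩, rfl⟩
  obtain ⟨s, rfl⟩ : ∃ s, n = r + s := ⟨n - r, by omega⟩
  dsimp only
  rw [Nat.add_sub_cancel_left, Nat.le_div_iff_mul_le (by norm_num)]
  zify
  nlinarith [sq_nonneg ((r : ℤ) - s)]

theorem mul_le_of_forall_matrix_defined_over (F : Type u) [Field F] {n k r d : ℕ} (hkr : k + r = n)
    (hd : ∀ (L : Type u) [Field L] [Algebra F L] (m : Matrix (Fin n) (Fin n) L),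
      ∃ E : IntermediateField F L, trdeg F E ≤ (d : Cardinal.{u}) ∧
        ∃ (m₀ : Matrix (Fin n) (Fin n) E) (g : Matrix.GeneralLinearGroup (Fin n) L),
          m₀.map (algebraMap E L) = (g : Matrix (Fin n) (Fin n) L) * m) :
    r * k ≤ d := by
  let R := MvPolynomial (Fin r × Fin k) F
  let L := FractionRing R
  let X : Matrix (Fin r) (Fin k) L := Matrix.of fun i j => algebraMap R L (MvPolynomial.X (i, j))
  have hX : AlgebraicIndependent F fun p : Fin r × Fin k => X p.1 p.2 :=
    (MvPolynomial.algebraicIndependent_X _ F).map' (f := IsScalarTower.toAlgHom F R L)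
      (IsFractionRing.injective R L)
  let e : Fin k ⊕ Fin r ≃ Fin n := finSumFinEquiv.trans (finCongr hkr)
  obtain ⟨E, hEd, m₀, g, hm₀⟩ := hd L ((fromBlocks 0 0 X 1).submatrix e.symm e.symm)
  have hXE : ∀ p : Fin r × Fin k, X p.1 p.2 ∈ E := fun p => by
    obtain ⟨a, ha⟩ := mem_range_of_mulVec_eq_zero_iff_fromBlocks (algebraMap E L) X
      (m₀.submatrix id e) (map_submatrix_mulVec_eq_zero_iff _ e g hm₀) p.1 p.2
    exact ha ▸ a.2
  have hcard : ((r * k : ℕ) : Cardinal.{u}) ≤ d := by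
    simpa using (IntermediateField.lift_cardinalMk_le_trdeg_of_forall_mem hX hXE).trans
      (Cardinal.lift_le.2 hEd)
  exact_mod_cast hcard

theorem stmt14_general (F : Type u) [Field F] (n : ℕ) (hn : 2 ≤ n) :
    -- the kernel map on the rank-`r` locus:
    (∀ r : ℕ, 1 ≤ r → r ≤ n - 1 →
      ∀ (L : Type u) [Field L] [Algebra F L],
        -- it is `GL_n`-equivariant: left multiplication does not change the kernel
        (∀ (g : Matrix.GeneralLinearGroup (Fin n) L) (m : Matrix (Fin n) (Fin n) L),
          m.rank = r →
          LinearMap.ker (((g : Matrix (Fin n) (Fin n) L) * m).mulVecLin) =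
            LinearMap.ker m.mulVecLin) ∧
        -- it is surjective on `L`-points: every `L`-point of `Gr(n−r,n)` lifts to `Y_r`
        (∀ W : Submodule L (Fin n → L), Module.finrank L W = n - r →
          ∃ m : Matrix (Fin n) (Fin n) L,
            m.rank = r ∧ LinearMap.ker m.mulVecLin = W)) ∧
    -- `max_{1≤r≤n−1} dim Gr(n−r,n) = max r(n−r) = ⌊n²/4⌋`:
    IsGreatest ((fun r => r * (n - r)) '' Set.Icc 1 (n - 1)) (n ^ 2 / 4) ∧
    -- consequently `ed [M/GL_n] ≥ ⌊n²/4⌋`: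
    (∀ d : ℕ,
      (∀ (L : Type u) [Field L] [Algebra F L] (m : Matrix (Fin n) (Fin n) L),
        ∃ E : IntermediateField F L, trdeg F E ≤ (d : Cardinal.{u}) ∧
          ∃ (m₀ : Matrix (Fin n) (Fin n) E) (g : Matrix.GeneralLinearGroup (Fin n) L),
            m₀.map (algebraMap E L) = (g : Matrix (Fin n) (Fin n) L) * m) →
      n ^ 2 / 4 ≤ d) := by
  refine ⟨fun r _ hr L _ _ => ⟨fun g m _ => ker_unit_mul_mulVecLin g m, fun W hW => ?_⟩,
    isGreatest_mul_sub hn, fun d hd => ?_⟩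
  · obtain ⟨m, hrank, hker⟩ := exists_ker_mulVecLin_eq W
    rw [hW, Fintype.card_fin] at hrank
    exact ⟨m, by omega, hker⟩
  · rw [← n.div_two_mul_sub_div_two]
    exact mul_le_of_forall_matrix_defined_over F (by omega) hd

theorem stmt14 (F : Type u) [Field F] [IsAlgClosed F] [CharZero F] (n : ℕ) (hn : 2 ≤ n) :
    -- the kernel map on the rank-`r` locus:
    (∀ r : ℕ, 1 ≤ r → r ≤ n - 1 →
      ∀ (L : Type u) [Field L] [Algebra F L],
        -- it is `GL_n`-equivariant: left multiplication does not change the kernel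
        (∀ (g : Matrix.GeneralLinearGroup (Fin n) L) (m : Matrix (Fin n) (Fin n) L),
          m.rank = r →
          LinearMap.ker (((g : Matrix (Fin n) (Fin n) L) * m).mulVecLin) =
            LinearMap.ker m.mulVecLin) ∧
        -- it is surjective on `L`-points: every `L`-point of `Gr(n−r,n)` lifts to `Y_r`
        (∀ W : Submodule L (Fin n → L), Module.finrank L W = n - r →
          ∃ m : Matrix (Fin n) (Fin n) L,
            m.rank = r ∧ LinearMap.ker m.mulVecLin = W)) ∧
    -- `max_{1≤r≤n−1} dim Gr(n−r,n) = max r(n−r) = ⌊n²/4⌋`: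
    IsGreatest ((fun r => r * (n - r)) '' Set.Icc 1 (n - 1)) (n ^ 2 / 4) ∧
    -- consequently `ed [M/GL_n] ≥ ⌊n²/4⌋`:
    (∀ d : ℕ,
      (∀ (L : Type u) [Field L] [Algebra F L] (m : Matrix (Fin n) (Fin n) L),
        ∃ E : IntermediateField F L, trdeg F E ≤ (d : Cardinal.{u}) ∧
          ∃ (m₀ : Matrix (Fin n) (Fin n) E) (g : Matrix.GeneralLinearGroup (Fin n) L),
            m₀.map (algebraMap E L) = (g : Matrix (Fin n) (Fin n) L) * m) →
      n ^ 2 / 4 ≤ d) :=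
  stmt14_general F n hn
end
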